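/- Let α : [0,1] → ℝ be a continuous function satisfying the nonlocal integral equation α(t) = 2·∫_0^{1−t} α(s)·α(s+t) ds + ∫_0^t α(s)·α(t−s) ds for every t ∈ [0,1]. For each integer N ≥ 1 define a_N ∈ ℝ^{N+1} by (a_N)_n = α(n/(N+1)) for n = 0,…,N. Then for every ε > 0 there exists N1 ≥ 1 such that for all N ≥ N1 one has max_{0 ≤ n ≤ N} |F_N(a_N)_n| < ε. -/
import Mathlib


/-- The rescaled matching map `F_N : ℝ^{N+1} → ℝ^{N+1}`,
`F_N(a)_n = a_n − (2/(N+1))·∑_{j=1}^{N−n} a_j·a_{n+j} − (1/(N+1))·∑_{j=0}^{n} a_j·a_{n−j}`. -/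
noncomputable def FNmap (N : ℕ) (a : ℕ → ℝ) (n : ℕ) : ℝ :=
  a n - (2 / ((N : ℝ) + 1)) * ∑ j ∈ Finset.Icc 1 (N - n), a j * a (n + j)
      - (1 / ((N : ℝ) + 1)) * ∑ j ∈ Finset.range (n + 1), a j * a (n - j)

lemma riemann_aux (f : ℝ → ℝ) (hf : Continuous f) (h c : ℝ) (hc : 0 ≤ c) (hh : 0 ≤ h)
    (K : ℕ) (hK : ∀ j < K, ∀ s ∈ Set.Icc ((j:ℝ)*h) (((j:ℝ)+1)*h), |f s - f ((j:ℝ)*h)| ≤ c) :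
    |(∫ s in (0:ℝ)..((K:ℝ)*h), f s) - ∑ j ∈ Finset.range K, h * f ((j:ℝ)*h)| ≤ (K:ℝ)*h*c := by
  induction K with
  | zero => simp
  | succ K ih =>
    have hint : ∀ a b : ℝ, IntervalIntegrable f MeasureTheory.volume a b :=
      fun a b => hf.intervalIntegrable a b
    have hcast : (((K:ℕ)+1 : ℕ) : ℝ) = (K:ℝ)+1 := by push_cast; ring
    have hsplit : (∫ s in (0:ℝ)..(((K:ℝ)+1)*h), f s)
        = (∫ s in (0:ℝ)..((K:ℝ)*h), f s) + ∫ s in ((K:ℝ)*h)..(((K:ℝ)+1)*h), f s :=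
      (intervalIntegral.integral_add_adjacent_intervals (hint _ _) (hint _ _)).symm
    have hab : (K:ℝ)*h ≤ ((K:ℝ)+1)*h := by nlinarith
    have hpiece : |(∫ s in ((K:ℝ)*h)..(((K:ℝ)+1)*h), f s) - h * f ((K:ℝ)*h)| ≤ c * h := by
      have heqi : (∫ s in ((K:ℝ)*h)..(((K:ℝ)+1)*h), (f s - f ((K:ℝ)*h)))
          = (∫ s in ((K:ℝ)*h)..(((K:ℝ)+1)*h), f s) - h * f ((K:ℝ)*h) := by
        rw [intervalIntegral.integral_sub (hint _ _) intervalIntegrable_const,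
          intervalIntegral.integral_const, smul_eq_mul]
        ring
      rw [← heqi]
      have := intervalIntegral.norm_integral_le_of_norm_le_const
        (f := fun s => f s - f ((K:ℝ)*h)) (a := (K:ℝ)*h) (b := ((K:ℝ)+1)*h) (C := c) ?_
      · calc |∫ s in ((K:ℝ)*h)..(((K:ℝ)+1)*h), (f s - f ((K:ℝ)*h))| ≤ c * |((K:ℝ)+1)*h - (K:ℝ)*h| := this
          _ = c * h := by rw [abs_of_nonneg (by nlinarith : (0:ℝ) ≤ ((K:ℝ)+1)*h - (K:ℝ)*h)]; ring
      · intro x hx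
        rw [Set.uIoc_of_le hab] at hx
        exact hK K (Nat.lt_succ_self K) x ⟨le_of_lt hx.1, hx.2⟩
    have ih' := ih (fun j hj => hK j (hj.trans (Nat.lt_succ_self K)))
    rw [hcast, hsplit, Finset.sum_range_succ]
    have hre : ((∫ s in (0:ℝ)..((K:ℝ)*h), f s) + ∫ s in ((K:ℝ)*h)..(((K:ℝ)+1)*h), f s)
        - (∑ j ∈ Finset.range K, h * f ((j:ℝ)*h) + h * f ((K:ℝ)*h))
        = ((∫ s in (0:ℝ)..((K:ℝ)*h), f s) - ∑ j ∈ Finset.range K, h * f ((j:ℝ)*h))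
        + ((∫ s in ((K:ℝ)*h)..(((K:ℝ)+1)*h), f s) - h * f ((K:ℝ)*h)) := by ring
    rw [hre]
    calc |((∫ s in (0:ℝ)..((K:ℝ)*h), f s) - ∑ j ∈ Finset.range K, h * f ((j:ℝ)*h))
          + ((∫ s in ((K:ℝ)*h)..(((K:ℝ)+1)*h), f s) - h * f ((K:ℝ)*h))|
        ≤ |(∫ s in (0:ℝ)..((K:ℝ)*h), f s) - ∑ j ∈ Finset.range K, h * f ((j:ℝ)*h)|
          + |(∫ s in ((K:ℝ)*h)..(((K:ℝ)+1)*h), f s) - h * f ((K:ℝ)*h)| := abs_add_le _ _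
      _ ≤ (K:ℝ)*h*c + c*h := add_le_add ih' hpiece
      _ = ((K:ℝ)+1)*h*c := by ring

/-- if the continuous function `α : [0,1] → ℝ` solves the nonlocal integral
equation, then the discretisations `(a_N)_n = α(n/(N+1))` satisfy
`max_{0 ≤ n ≤ N} |F_N(a_N)_n| < ε` for all sufficiently large `N`. -/
theorem FNmap_small_on_discretisation
    (α : ℝ → ℝ) (hcont : ContinuousOn α (Set.Icc 0 1))
    (heq : ∀ t ∈ Set.Icc (0 : ℝ) 1,
      α t = 2 * (∫ s in (0 : ℝ)..(1 - t), α s * α (s + t)) +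
        ∫ s in (0 : ℝ)..t, α s * α (t - s)) :
    ∀ ε > (0 : ℝ), ∃ N₁ : ℕ, 1 ≤ N₁ ∧ ∀ N, N₁ ≤ N → ∀ n ≤ N,
      |FNmap N (fun k => α ((k : ℝ) / ((N : ℝ) + 1))) n| < ε := by
  intro ε hε
  set proj : ℝ → ℝ := fun x => max (min x 1) 0 with hproj
  have hprojmem : ∀ x, proj x ∈ Set.Icc (0:ℝ) 1 := fun x =>
    ⟨le_max_right _ _, max_le (min_le_right _ _) zero_le_one⟩
  have hprojlip : LipschitzWith 1 proj := (LipschitzWith.id.min_const 1).max_const 0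
  have hprojid : ∀ x ∈ Set.Icc (0:ℝ) 1, proj x = x := by
    rintro x ⟨h0, h1⟩
    simp [hproj, min_eq_left h1, max_eq_left h0]
  set β : ℝ → ℝ := fun x => α (proj x) with hβ
  have hβc : Continuous β := hcont.comp_continuous hprojlip.continuous hprojmem
  have hβα : ∀ x ∈ Set.Icc (0:ℝ) 1, β x = α x := by
    intro x hx
    have hp := hprojid x hx
    simp [hβ, hp]
  obtain ⟨M0, hM0⟩ := isCompact_Icc.exists_bound_of_continuousOn hcont
  set M : ℝ := max M0 1 with hM
  have hM1 : (1:ℝ) ≤ M := le_max_right _ _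
  have hMpos : (0:ℝ) < M := lt_of_lt_of_le one_pos hM1
  have hMb : ∀ x, |β x| ≤ M := by
    intro x
    have := hM0 _ (hprojmem x)
    simp only [Real.norm_eq_abs] at this
    exact le_trans this (le_max_left _ _)
  set ε' : ℝ := ε / (12 * M) with hε'def
  have hε'pos : 0 < ε' := by positivity
  obtain ⟨δ, hδ0, hδ⟩ := Metric.uniformContinuousOn_iff.mp
    (isCompact_Icc.uniformContinuousOn_of_continuous hcont) ε' hε'pos
  have hω : ∀ x y : ℝ, |x - y| < δ → |β x - β y| < ε' := by
    intro x y hxy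
    have hlip : dist (proj x) (proj y) ≤ dist x y := by
      simpa using hprojlip.dist_le_mul x y
    have := hδ _ (hprojmem x) _ (hprojmem y)
      (lt_of_le_of_lt hlip (by rwa [Real.dist_eq]))
    rwa [Real.dist_eq] at this
  obtain ⟨N₁', hN₁'⟩ := exists_nat_gt (max (1/δ) (16*M^2/ε))
  refine ⟨max N₁' 1, le_max_right _ _, ?_⟩
  intro N hN n hn
  set h : ℝ := 1 / ((N:ℝ)+1) with hh
  have hNpos : (0:ℝ) < (N:ℝ)+1 := by positivity
  have hhpos : 0 < h := by positivity
  have hhN : h * ((N:ℝ)+1) = 1 := by rw [hh]; field_simp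
  have hNge : (N₁' : ℝ) ≤ (N:ℝ) := by exact_mod_cast le_trans (le_max_left _ _) hN
  have hd1 : 1/δ < (N:ℝ)+1 := lt_of_lt_of_le (lt_of_le_of_lt (le_max_left _ _) hN₁') (by linarith)
  have hd2 : 16*M^2/ε < (N:ℝ)+1 := lt_of_lt_of_le (lt_of_le_of_lt (le_max_right _ _) hN₁') (by linarith)
  have hhδ : h < δ := by
    rw [hh]
    calc 1/((N:ℝ)+1) < 1/(1/δ) := by
          apply one_div_lt_one_div_of_lt (by positivity) hd1
      _ = δ := one_div_one_div δ
  have h4M : 4*(M^2*h) < ε/4 := by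
    have hE : 16*M^2 < ε*((N:ℝ)+1) := by
      have := (div_lt_iff₀ hε).mp hd2
      linarith
    have h2 : ε*((N:ℝ)+1)*h = ε := by rw [hh]; field_simp
    have h3 := mul_lt_mul_of_pos_right hE hhpos
    linarith
  set t : ℝ := (n:ℝ) * h with ht
  have hnN : (n:ℝ) ≤ (N:ℝ) := by exact_mod_cast hn
  have ht0 : 0 ≤ t := by positivity
  have ht1 : t ≤ 1 := by
    rw [ht, hh, mul_one_div, div_le_one hNpos]
    linarith
  have ht01 : t ∈ Set.Icc (0:ℝ) 1 := ⟨ht0, ht1⟩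
  have hak : ∀ k : ℕ, k ≤ N + 1 → α ((k:ℝ)/((N:ℝ)+1)) = β ((k:ℝ)*h) := by
    intro k hk
    have hkr : (k:ℝ) ≤ (N:ℝ)+1 := by exact_mod_cast hk
    have hmem : (k:ℝ)*h ∈ Set.Icc (0:ℝ) 1 := by
      constructor
      · positivity
      · rw [hh]
        rw [mul_one_div, div_le_one hNpos]
        exact hkr
    rw [show (k:ℝ)/((N:ℝ)+1) = (k:ℝ)*h from by rw [hh]; ring, hβα _ hmem]
  set f2 : ℝ → ℝ := fun s => β s * β (s + t) with hf2
  set f3 : ℝ → ℝ := fun s => β s * β (t - s) with hf3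
  have hf2c : Continuous f2 := hβc.mul (hβc.comp (continuous_id.add continuous_const))
  have hf3c : Continuous f3 := hβc.mul (hβc.comp (continuous_const.sub continuous_id))
  set c : ℝ := 2*M*ε' with hc
  have hc0 : 0 ≤ c := by positivity
  have hprod : ∀ x y u v : ℝ, |x| ≤ M → |v| ≤ M → |x - u| < ε' → |y - v| < ε' →
      |x*y - u*v| ≤ c := by
    intro x y u v hx hv hxu hyv
    have : x*y - u*v = x*(y - v) + (x - u)*v := by ring
    rw [this]
    calc |x * (y - v) + (x - u) * v| ≤ |x * (y - v)| + |(x - u) * v| := abs_add_le _ _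
      _ = |x| * |y - v| + |x - u| * |v| := by rw [abs_mul, abs_mul]
      _ ≤ M*ε' + ε'*M := by
          apply add_le_add
          · exact mul_le_mul hx hyv.le (abs_nonneg _) hMpos.le
          · exact mul_le_mul hxu.le hv (abs_nonneg _) (le_of_lt hε'pos)
      _ = c := by rw [hc]; ring
  have hclose : ∀ (j : ℕ) (s : ℝ), s ∈ Set.Icc ((j:ℝ)*h) (((j:ℝ)+1)*h) → |s - (j:ℝ)*h| < δ := by
    intro j s hs
    rw [abs_of_nonneg (by linarith [hs.1])]
    have := hs.2
    nlinarith [hs.1, hs.2]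
  have hp2 : ∀ j < N + 1 - n, ∀ s ∈ Set.Icc ((j:ℝ)*h) (((j:ℝ)+1)*h),
      |f2 s - f2 ((j:ℝ)*h)| ≤ c := by
    intro j _ s hs
    have h1 := hω s ((j:ℝ)*h) (hclose j s hs)
    have h2 : |(s + t) - ((j:ℝ)*h + t)| < δ := by
      rw [show (s + t) - ((j:ℝ)*h + t) = s - (j:ℝ)*h from by ring]
      exact hclose j s hs
    exact hprod _ _ _ _ (hMb s) (hMb _) h1 (hω _ _ h2)
  have hp3 : ∀ j < n, ∀ s ∈ Set.Icc ((j:ℝ)*h) (((j:ℝ)+1)*h),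
      |f3 s - f3 ((j:ℝ)*h)| ≤ c := by
    intro j _ s hs
    have h1 := hω s ((j:ℝ)*h) (hclose j s hs)
    have h2 : |(t - s) - (t - (j:ℝ)*h)| < δ := by
      rw [show (t - s) - (t - (j:ℝ)*h) = -(s - (j:ℝ)*h) from by ring, abs_neg]
      exact hclose j s hs
    exact hprod _ _ _ _ (hMb s) (hMb _) h1 (hω _ _ h2)
  have hR2 := riemann_aux f2 hf2c h c hc0 hhpos.le (N + 1 - n) hp2
  have hR3 := riemann_aux f3 hf3c h c hc0 hhpos.le n hp3
  have hend2 : ((N + 1 - n : ℕ):ℝ) * h = 1 - t := by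
    have : ((N + 1 - n : ℕ):ℝ) = (N:ℝ) + 1 - (n:ℝ) := by
      have : n ≤ N + 1 := le_trans hn (Nat.le_succ N)
      push_cast [Nat.cast_sub this]
      ring
    rw [this, ht]
    linear_combination hhN
  have hend3 : ((n : ℕ):ℝ) * h = t := rfl
  rw [hend2] at hR2
  -- bound RHS of hR2 and hR3 by c
  have hR2' : |(∫ s in (0:ℝ)..(1-t), f2 s) - ∑ j ∈ Finset.range (N+1-n), h * f2 ((j:ℝ)*h)| ≤ c := by
    refine le_trans hR2 ?_
    calc (1 - t) * c ≤ 1 * c := mul_le_mul_of_nonneg_right (by linarith) hc0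
      _ = c := one_mul c
  have hR3' : |(∫ s in (0:ℝ)..t, f3 s) - ∑ j ∈ Finset.range n, h * f3 ((j:ℝ)*h)| ≤ c := by
    rw [hend3] at hR3
    refine le_trans hR3 ?_
    calc t * c ≤ 1 * c := mul_le_mul_of_nonneg_right ht1 hc0
      _ = c := one_mul c
  -- integral congruence
  have h1t : 0 ≤ 1 - t := by linarith
  have hI2 : (∫ s in (0:ℝ)..(1-t), α s * α (s + t)) = ∫ s in (0:ℝ)..(1-t), f2 s := by
    apply intervalIntegral.integral_congr
    rw [Set.uIcc_of_le h1t]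
    intro s hs
    have hs1 : s ∈ Set.Icc (0:ℝ) 1 := ⟨hs.1, by linarith [hs.2]⟩
    have hs2 : s + t ∈ Set.Icc (0:ℝ) 1 := ⟨by linarith [hs.1], by linarith [hs.2]⟩
    simp only [hf2]
    rw [hβα _ hs1, hβα _ hs2]
  have hI3 : (∫ s in (0:ℝ)..t, α s * α (t - s)) = ∫ s in (0:ℝ)..t, f3 s := by
    apply intervalIntegral.integral_congr
    rw [Set.uIcc_of_le ht0]
    intro s hs
    have hs1 : s ∈ Set.Icc (0:ℝ) 1 := ⟨hs.1, by linarith [hs.2]⟩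
    have hs2 : t - s ∈ Set.Icc (0:ℝ) 1 := ⟨by linarith [hs.2], by linarith [hs.1]⟩
    simp only [hf3]
    rw [hβα _ hs1, hβα _ hs2]
  -- sums
  have hS2 : h * ∑ j ∈ Finset.Icc 1 (N - n), α ((j:ℝ)/((N:ℝ)+1)) * α (((n + j : ℕ):ℝ)/((N:ℝ)+1))
      = ∑ j ∈ Finset.range (N - n), h * f2 (((j:ℝ)+1)*h) := by
    rw [← Finset.Ico_add_one_right_eq_Icc, Finset.sum_Ico_eq_sum_range, Finset.mul_sum]
    apply Finset.sum_congr (by congr 1)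
    intro i hi
    rw [Finset.mem_range] at hi
    have hi1 : 1 + i ≤ N + 1 := by omega
    have hi2 : n + (1 + i) ≤ N + 1 := by omega
    rw [hak _ hi1, hak _ hi2, hf2]
    simp only
    rw [show ((1+i : ℕ):ℝ)*h = ((i:ℝ)+1)*h from by push_cast; ring,
      show ((n+(1+i) : ℕ):ℝ)*h = ((i:ℝ)+1)*h + t from by rw [ht]; push_cast; ring]
  have hS2' : ∑ j ∈ Finset.range (N+1-n), h * f2 ((j:ℝ)*h)
      = (∑ j ∈ Finset.range (N - n), h * f2 (((j:ℝ)+1)*h)) + h * f2 0 := by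
    have hK : N + 1 - n = (N - n) + 1 := by omega
    rw [hK, Finset.sum_range_succ']
    congr 1
    · apply Finset.sum_congr rfl
      intro i _
      congr 2
      push_cast; ring
    · norm_num
  have hS3 : h * ∑ j ∈ Finset.range (n + 1), α ((j:ℝ)/((N:ℝ)+1)) * α (((n - j : ℕ):ℝ)/((N:ℝ)+1))
      = (∑ j ∈ Finset.range n, h * f3 ((j:ℝ)*h)) + h * f3 t := by
    rw [Finset.mul_sum, Finset.sum_range_succ]
    congr 1
    · apply Finset.sum_congr rfl
      intro j hj
      rw [Finset.mem_range] at hj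
      have hj1 : j ≤ N + 1 := by omega
      have hj2 : n - j ≤ N + 1 := by omega
      rw [hak _ hj1, hak _ hj2, hf3]
      simp only
      rw [show ((n - j : ℕ):ℝ)*h = t - (j:ℝ)*h from by
        rw [ht, Nat.cast_sub (by omega : j ≤ n)]; ring]
    · have hn1 : n ≤ N + 1 := by omega
      rw [hak _ hn1, Nat.sub_self, hak 0 (by omega), hf3]
      simp only
      rw [← ht]
      norm_num
  -- final assembly
  have hF : FNmap N (fun k => α ((k : ℝ) / ((N : ℝ) + 1))) n
      = 2 * ((∫ s in (0:ℝ)..(1-t), f2 s) - ∑ j ∈ Finset.range (N+1-n), h * f2 ((j:ℝ)*h))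
      + ((∫ s in (0:ℝ)..t, f3 s) - ((∑ j ∈ Finset.range n, h * f3 ((j:ℝ)*h)) + h * f3 t))
      + 2 * (h * f2 0) := by
    have han : α ((n:ℝ)/((N:ℝ)+1)) = α t := by rw [ht, hh]; ring_nf
    have hαt := heq t ht01
    rw [FNmap]
    rw [han, hαt, hI2, hI3, ← hS3, hS2', ← hS2]
    rw [show (2 / ((N:ℝ)+1)) = 2 * h from by rw [hh]; ring,
      show (1 / ((N:ℝ)+1)) = h from rfl]
    ring
  have hb2 : |h * f2 0| ≤ M^2 * h := by
    rw [abs_mul, abs_of_nonneg hhpos.le, hf2]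
    simp only
    rw [abs_mul]
    calc h * (|β 0| * |β (0 + t)|) ≤ h * (M * M) := by
          apply mul_le_mul_of_nonneg_left _ hhpos.le
          exact mul_le_mul (hMb 0) (hMb _) (abs_nonneg _) hMpos.le
      _ = M^2 * h := by ring
  have hb3 : |h * f3 t| ≤ M^2 * h := by
    rw [abs_mul, abs_of_nonneg hhpos.le, hf3]
    simp only
    rw [abs_mul]
    calc h * (|β t| * |β (t - t)|) ≤ h * (M * M) := by
          apply mul_le_mul_of_nonneg_left _ hhpos.le
          exact mul_le_mul (hMb t) (hMb _) (abs_nonneg _) hMpos.le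
      _ = M^2 * h := by ring
  rw [hF]
  have e3 : |(∫ s in (0:ℝ)..t, f3 s) - ((∑ j ∈ Finset.range n, h * f3 ((j:ℝ)*h)) + h * f3 t)|
      ≤ c + M^2*h := by
    calc |(∫ s in (0:ℝ)..t, f3 s) - ((∑ j ∈ Finset.range n, h * f3 ((j:ℝ)*h)) + h * f3 t)|
        = |((∫ s in (0:ℝ)..t, f3 s) - ∑ j ∈ Finset.range n, h * f3 ((j:ℝ)*h)) + (-(h * f3 t))| := by
          congr 1; ring
      _ ≤ |(∫ s in (0:ℝ)..t, f3 s) - ∑ j ∈ Finset.range n, h * f3 ((j:ℝ)*h)| + |(-(h * f3 t))| :=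
          abs_add_le _ _
      _ ≤ c + M^2*h := by rw [abs_neg]; exact add_le_add hR3' hb3
  have e2 : |2 * ((∫ s in (0:ℝ)..(1-t), f2 s)
      - ∑ j ∈ Finset.range (N+1-n), h * f2 ((j:ℝ)*h))| ≤ 2 * c := by
    rw [abs_mul, abs_two]; linarith [hR2']
  have e4 : |2 * (h * f2 0)| ≤ 2 * (M^2*h) := by
    rw [abs_mul, abs_two]; linarith [hb2]
  have htri : |2 * ((∫ s in (0:ℝ)..(1-t), f2 s) - ∑ j ∈ Finset.range (N+1-n), h * f2 ((j:ℝ)*h))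
      + ((∫ s in (0:ℝ)..t, f3 s) - ((∑ j ∈ Finset.range n, h * f3 ((j:ℝ)*h)) + h * f3 t))
      + 2 * (h * f2 0)|
      ≤ 2 * c + (c + M^2*h) + 2 * (M^2*h) :=
    le_trans (abs_add_le _ _) (add_le_add (le_trans (abs_add_le _ _) (add_le_add e2 e3)) e4)
  refine lt_of_le_of_lt htri ?_
  have hceq : 3 * c = ε / 2 := by
    rw [hc, hε'def]
    field_simp
    ring
  linarith [h4M, hceq]
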